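/- arXiv:1501.04464 — 4 statements merged into one kernel-verified Lean document; each statement's English description precedes it below -/
import Mathlib

section
/- Let (R, 𝔪) be a commutative Noetherian local ring, I, J ideals of R, and M, N two R-modules such that Supp_R M ⊆ W(I,J). Then the inclusion Γ_{I,J}(N) ⊆ N induces a natural isomorphism Hom_R(M, Γ_{I,J}(N)) ≅ Hom_R(M, N). -/
open CategoryTheory IsLocalRing

universe u

section PairTorsion

variable {R : Type u} [CommRing R]

/-- The `(I,J)`-torsion submodule `Γ_{I,J}(M) = { x ∈ M ∣ Iⁿ x ⊆ J x  for n ≫ 1 }`. -/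
def pairTorsionSubmodule (I J : Ideal R) (M : Type u) [AddCommGroup M] [Module R M] :
    Submodule R M where
  carrier := {x | ∃ n : ℕ, ∀ a ∈ I ^ n, a • x ∈ J • (Submodule.span R {x})}
  zero_mem' := ⟨0, fun a _ => by simp⟩
  add_mem' := by
    rintro x y ⟨n, hn⟩ ⟨m, hm⟩
    have hx : I ^ n ≤ J + (Submodule.span R {x}).annihilator := by
      intro a ha
      obtain ⟨j, hj, hjx⟩ := Submodule.mem_smul_span_singleton.1 (hn a ha)
      exact Submodule.mem_sup.2 ⟨j, hj, a - j,
        (Submodule.mem_annihilator_span_singleton _ _).2 (by rw [sub_smul, hjx, sub_self]),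
        by ring⟩
    have hy : I ^ m ≤ J + (Submodule.span R {y}).annihilator := by
      intro a ha
      obtain ⟨j, hj, hjy⟩ := Submodule.mem_smul_span_singleton.1 (hm a ha)
      exact Submodule.mem_sup.2 ⟨j, hj, a - j,
        (Submodule.mem_annihilator_span_singleton _ _).2 (by rw [sub_smul, hjy, sub_self]),
        by ring⟩
    refine ⟨n + m, fun a ha => ?_⟩
    rw [pow_add] at ha
    have key : I ^ n * I ^ m ≤ J + (Submodule.span R {x + y}).annihilator := by
      rw [Ideal.mul_le]
      intro r hr s hs
      obtain ⟨j1, hj1, s1, hs1, rfl⟩ := Submodule.mem_sup.1 (hx hr)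
      obtain ⟨j2, hj2, s2, hs2, rfl⟩ := Submodule.mem_sup.1 (hy hs)
      rw [Submodule.mem_annihilator_span_singleton] at hs1 hs2
      have : (j1 + s1) * (j2 + s2) = (j1 * (j2 + s2) + s1 * j2) + s1 * s2 := by ring
      rw [this]
      refine Submodule.mem_sup.2 ⟨j1 * (j2 + s2) + s1 * j2,
        Ideal.add_mem _ (Ideal.mul_mem_right _ _ hj1) (Ideal.mul_mem_left _ _ hj2),
        s1 * s2, (Submodule.mem_annihilator_span_singleton _ _).2 ?_, rfl⟩
      have h1 : (s1 * s2) • x = 0 := by rw [mul_comm, mul_smul, hs1, smul_zero]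
      have h2 : (s1 * s2) • y = 0 := by rw [mul_smul, hs2, smul_zero]
      rw [smul_add, h1, h2, add_zero]
    obtain ⟨j, hj, s, hs, rfl⟩ := Submodule.mem_sup.1 (key ha)
    rw [Submodule.mem_annihilator_span_singleton] at hs
    exact Submodule.mem_smul_span_singleton.2 ⟨j, hj, by rw [add_smul, hs, add_zero]⟩
  smul_mem' := by
    rintro r x ⟨n, hn⟩
    refine ⟨n, fun a ha => ?_⟩
    obtain ⟨j, hj, hjx⟩ := Submodule.mem_smul_span_singleton.1 (hn a ha)
    exact Submodule.mem_smul_span_singleton.2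
      ⟨j, hj, by rw [smul_comm j r x, hjx, smul_comm]⟩

lemma pairTorsionSubmodule_map_mem (I J : Ideal R) {M N : Type u}
    [AddCommGroup M] [Module R M] [AddCommGroup N] [Module R N]
    (f : M →ₗ[R] N) {x : M} (hx : x ∈ pairTorsionSubmodule I J M) :
    f x ∈ pairTorsionSubmodule I J N := by
  obtain ⟨n, hn⟩ := hx
  refine ⟨n, fun a ha => ?_⟩
  obtain ⟨j, hj, hjx⟩ := Submodule.mem_smul_span_singleton.1 (hn a ha)
  exact Submodule.mem_smul_span_singleton.2
    ⟨j, hj, by rw [← map_smul, hjx, map_smul]⟩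

/-- The `(I,J)`-torsion functor `Γ_{I,J}` on the category of `R`-modules. -/
def pairTorsionFunctor (I J : Ideal R) : ModuleCat.{u} R ⥤ ModuleCat.{u} R where
  obj M := ModuleCat.of R (pairTorsionSubmodule I J M)
  map {M N} f := ModuleCat.ofHom
    (LinearMap.restrict f.hom (fun x hx => pairTorsionSubmodule_map_mem I J f.hom hx))
  map_id M := by ext x; rfl
  map_comp f g := by ext x; rfl

instance (I J : Ideal R) : (pairTorsionFunctor I J).Additive where
  map_add := by intros; ext x; rfl

/-- The local cohomology functor `H^i_{I,J}` with respect to the pair of ideals `(I,J)`,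
defined as the `i`-th right derived functor of the `(I,J)`-torsion functor. -/
noncomputable def pairLocalCohomology (I J : Ideal R) (i : ℕ) :
    ModuleCat.{u} R ⥤ ModuleCat.{u} R :=
  (pairTorsionFunctor I J).rightDerived i

/-- `depth(I,J,M) = inf { i ∣ H^i_{I,J}(M) ≠ 0 }`, as an extended natural number. -/
noncomputable def pairDepth (I J : Ideal R) (M : ModuleCat.{u} R) : ℕ∞ :=
  sInf {i : ℕ∞ | ∃ n : ℕ, i = n ∧ Nontrivial ((pairLocalCohomology I J n).obj M)}

/-- `W(I,J)`: the set of primes `𝔭` with `Iⁿ ⊆ 𝔭 + J` for some `n`. -/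
def pairW (I J : Ideal R) : Set (PrimeSpectrum R) :=
  {p | ∃ n : ℕ, I ^ n ≤ p.asIdeal + J}

/-- `W̃(I,J)`: the set of ideals `𝔞` with `Iⁿ ⊆ 𝔞 + J` for some `n`. -/
def pairWtilde (I J : Ideal R) : Set (Ideal R) :=
  {a | ∃ n : ℕ, I ^ n ≤ a + J}

end PairTorsion

section Matlis

variable (R : Type u) [CommRing R]

/-- `E` is an injective hull of the residue field of the local ring `R`:
it is an injective module containing the residue field as an essential submodule. -/
def IsInjectiveHullOfResidueField [IsLocalRing R]
    (E : Type u) [AddCommGroup E] [Module R E] : Prop :=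
  Module.Injective R E ∧ ∃ ι : ResidueField R →ₗ[R] E, Function.Injective ι ∧
    ∀ N : Submodule R E, N ⊓ LinearMap.range ι = ⊥ → N = ⊥

/-- The Matlis dual `D(M) = Hom_R(M, E)`. -/
def matlisDual (E : Type u) [AddCommGroup E] [Module R E]
    (M : Type u) [AddCommGroup M] [Module R M] : ModuleCat.{u} R :=
  ModuleCat.of R (M →ₗ[R] E)

end Matlis

section CM

variable (R : Type u) [CommRing R] [IsLocalRing R]

/-- `R` is a `d`-dimensional Cohen-Macaulay local ring: its Krull dimension is `d` and its depth
(the least `i` with `H^i_𝔪(R) ≠ 0`) is also `d`. -/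
def IsCohenMacaulayLocalRingOfDim (d : ℕ) : Prop :=
  ringKrullDim R = d ∧ pairDepth (maximalIdeal R) ⊥ (ModuleCat.of R R) = (d : ℕ∞)

/-- `K` is a canonical module of the local ring `R` of dimension `d`: it is a finitely
generated module whose Bass numbers `μ_i(𝔪, K) = dim_k Ext^i_R(k, K)` vanish for `i ≠ d`
and equal `1` for `i = d`. -/
def IsCanonicalModule (d : ℕ) (K : ModuleCat.{u} R) : Prop :=
  Module.Finite R K ∧
    (∀ i : ℕ, i ≠ d →
      Subsingleton (((Ext R (ModuleCat.{u} R) i).obj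
        (Opposite.op (ModuleCat.of R (ResidueField R)))).obj K)) ∧
    Nonempty ((((Ext R (ModuleCat.{u} R) d).obj
        (Opposite.op (ModuleCat.of R (ResidueField R)))).obj K) ≃ₗ[R] ResidueField R)

end CM

section MinRes

variable {R : Type u} [CommRing R]

/-- An injective resolution is minimal if, in each degree `i`, the kernel of the differential
is an essential submodule of the `i`-th term (equivalently, each term is an injective hull
of the cocycles it contains). -/
def IsMinimalInjectiveResolution {M : ModuleCat.{u} R}
    (P : CategoryTheory.InjectiveResolution M) : Prop :=
  ∀ i : ℕ, ∀ N : Submodule R (P.cocomplex.X i),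
    N ⊓ LinearMap.ker (P.cocomplex.d i (i + 1)).hom = ⊥ → N = ⊥

end MinRes

/-- If `Supp_R M ⊆ W(I,J)`, then composition with the inclusion `Γ_{I,J}(N) ⊆ N` is an
isomorphism `Hom_R(M, Γ_{I,J}(N)) ≅ Hom_R(M, N)`. -/
theorem statement_5 {R : Type u} [CommRing R] [IsNoetherianRing R] [IsLocalRing R]
    (I J : Ideal R) (M N : ModuleCat.{u} R)
    (hM : Module.support R M ⊆ pairW I J) :
    Function.Bijective (fun f : M →ₗ[R] (pairTorsionSubmodule I J N) =>
      (pairTorsionSubmodule I J N).subtype ∘ₗ f) := by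
  constructor
  · intro f g hfg
    ext x
    exact LinearMap.congr_fun hfg x
  · intro f
    -- key: every element of M has `I^n ≤ Ann(span x) + J` for some `n`
    have key : ∀ x : M, ∃ n : ℕ, I ^ n ≤ (Submodule.span R {x}).annihilator + J := by
      intro x
      have hrad : I ≤ ((Submodule.span R {x}).annihilator + J).radical := by
        rw [Ideal.radical_eq_sInf]
        intro a ha
        refine Submodule.mem_sInf.2 ?_
        rintro p ⟨hle, hp⟩
        have hann : (Submodule.span R {x}).annihilator ≤ p := le_trans le_sup_left hle
        have hJp : J ≤ p := le_trans le_sup_right hle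
        have hmem : (⟨p, hp⟩ : PrimeSpectrum R) ∈ Module.support R M :=
          Module.mem_support_iff_exists_annihilator.mpr ⟨x, hann⟩
        obtain ⟨n, hn⟩ := hM hmem
        have hIn : I ^ n ≤ p := hn.trans (sup_le le_rfl hJp)
        exact hp.mem_of_pow_mem n (hIn (Ideal.pow_mem_pow ha n))
      obtain ⟨n, hn⟩ := Ideal.exists_pow_le_of_le_radical_of_fg hrad
        (IsNoetherian.noetherian I)
      exact ⟨n, hn⟩
    refine ⟨LinearMap.codRestrict _ f ?_, ?_⟩
    · intro x
      obtain ⟨n, hn⟩ := key x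
      refine ⟨n, fun a ha => ?_⟩
      obtain ⟨b, hb, j, hj, rfl⟩ := Submodule.mem_sup.1 (hn ha)
      rw [Submodule.mem_annihilator_span_singleton] at hb
      refine Submodule.mem_smul_span_singleton.2 ⟨j, hj, ?_⟩
      rw [add_smul, ← map_smul f b x, hb, map_zero, zero_add]
    · ext x
      rfl
end

section
/- Let (R, 𝔪) be a commutative Noetherian local ring, I, J ideals of R, and M, N two R-modules such that Supp_R M ⊆ W(I,J). Then the surjection D(N) → D(Γ_{I,J}(N)) dual to the inclusion Γ_{I,J}(N) ⊆ N induces a natural isomorphism M ⊗_R D(N) ≅ M ⊗_R D(Γ_{I,J}(N)), where D(-) = Hom_R(-, E_R(k)). -/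
open CategoryTheory IsLocalRing

universe u

open scoped TensorProduct

/-- If `Supp_R M ⊆ W(I,J)`, then tensoring `M` with the surjection `D(N) → D(Γ_{I,J}(N))`
(precomposition with the inclusion `Γ_{I,J}(N) ⊆ N`) is an isomorphism
`M ⊗_R D(N) ≅ M ⊗_R D(Γ_{I,J}(N))`. -/
theorem statement_6 {R : Type u} [CommRing R] [IsNoetherianRing R] [IsLocalRing R]
    (E : Type u) [AddCommGroup E] [Module R E] (hE : IsInjectiveHullOfResidueField R E)
    (I J : Ideal R) (M N : ModuleCat.{u} R)
    (hM : Module.support R M ⊆ pairW I J) :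
    Function.Bijective
      ⇑(LinearMap.lTensor (R := R) M
        (LinearMap.lcomp R E (pairTorsionSubmodule I J N).subtype :
          (N →ₗ[R] E) →ₗ[R] ((pairTorsionSubmodule I J N) →ₗ[R] E))) := by
  classical
  set Γ := pairTorsionSubmodule I J N with hΓ
  set r : (N →ₗ[R] E) →ₗ[R] ((Γ : Submodule R N) →ₗ[R] E) := LinearMap.lcomp R E Γ.subtype
    with hr_def
  -- surjectivity of the restriction map, by injectivity of `E`
  have hr : Function.Surjective r := by
    intro g
    obtain ⟨h, hh⟩ := hE.1.out Γ.subtype Γ.injective_subtype g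
    exact ⟨h, LinearMap.ext fun y => hh y⟩
  -- key claim : x ⊗ f = 0 whenever f vanishes on Γ
  have key : ∀ (x : M) (f : N →ₗ[R] E), r f = 0 →
      x ⊗ₜ[R] f = (0 : TensorProduct R (M : Type u) ((N : Type u) →ₗ[R] E)) := by
    intro x f hf
    set a : Ideal R := (Submodule.span R {x}).annihilator with ha
    have hrad : I ≤ (a + J).radical := by
      rw [Ideal.radical_eq_sInf]
      refine le_sInf ?_
      rintro p ⟨hp1, hp2⟩
      have hpsupp : (⟨p, hp2⟩ : PrimeSpectrum R) ∈ Module.support R M :=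
        Module.mem_support_iff_exists_annihilator.2
          ⟨x, le_trans (le_trans le_sup_left hp1) le_rfl⟩
      obtain ⟨n, hn⟩ := hM hpsupp
      have hJp : J ≤ p := le_trans le_sup_right hp1
      have hpow : I ^ n ≤ p := by
        refine hn.trans ?_
        have : (⟨p, hp2⟩ : PrimeSpectrum R).asIdeal + J = p := by
          rw [Submodule.add_eq_sup, sup_eq_left.2 hJp]
        rw [this]
      exact Ideal.IsPrime.le_of_pow_le hpow
    obtain ⟨n, hn⟩ := Ideal.exists_pow_le_of_le_radical_of_fg hrad
      (IsNoetherian.noetherian I)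
    obtain ⟨s, hs⟩ := IsNoetherian.noetherian a
    -- the map N → (s → N), y ↦ (c • y)
    set φ : N →ₗ[R] (↥s → (N : Type u)) :=
      LinearMap.pi (fun i : s => (i : R) • LinearMap.id) with hφ
    have hker : LinearMap.ker φ ≤ LinearMap.ker f := by
      intro y hy
      have hay : a ≤ (Submodule.span R {y}).annihilator := by
        rw [← hs, Submodule.span_le]
        intro c hc
        rw [SetLike.mem_coe, Submodule.mem_annihilator_span_singleton]
        have := congrFun (LinearMap.mem_ker.1 hy) ⟨c, hc⟩
        exact this
      have hyΓ : y ∈ Γ := by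
        refine ⟨n, fun c hc => ?_⟩
        obtain ⟨u, hu, v, hv, huv⟩ := Submodule.mem_sup.1 (hn hc)
        have hu0 : u • y = 0 :=
          (Submodule.mem_annihilator_span_singleton _ _).1 (hay hu)
        refine Submodule.mem_smul_span_singleton.2 ⟨v, hv, ?_⟩
        rw [← huv, add_smul, hu0, zero_add]
      have : f y = r f ⟨y, hyΓ⟩ := rfl
      rw [LinearMap.mem_ker, this, hf, LinearMap.zero_apply]
    -- factor f through φ using injectivity of E
    set fbar : (N ⧸ LinearMap.ker φ) →ₗ[R] E := Submodule.liftQ _ f hker with hfbar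
    set φbar : (N ⧸ LinearMap.ker φ) →ₗ[R] (↥s → (N : Type u)) :=
      Submodule.liftQ _ φ le_rfl with hφbar
    have hφbar_inj : Function.Injective φbar := by
      rw [← LinearMap.ker_eq_bot]
      exact Submodule.ker_liftQ_eq_bot _ _ _ le_rfl
    obtain ⟨h, hh⟩ := hE.1.out φbar hφbar_inj fbar
    have hfy : ∀ y : N, f y = h (φ y) := by
      intro y
      have h1 : f y = fbar (Submodule.Quotient.mk y) := rfl
      have h2 : φ y = φbar (Submodule.Quotient.mk y) := rfl
      rw [h1, h2, hh]
    -- write f as a finite sum ∑ c • (h ∘ single c)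
    have hfeq : f = ∑ i : s, (i : R) •
        (h ∘ₗ LinearMap.single R (fun _ : s => (N : Type u)) i) := by
      ext y
      rw [hfy]
      have : φ y = ∑ i : s, Pi.single i ((i : R) • y) := by
        rw [Finset.univ_sum_single (f := fun i : s => (i : R) • y)]
        rfl
      rw [this, map_sum]
      simp only [LinearMap.sum_apply, LinearMap.smul_apply, LinearMap.coe_comp,
        Function.comp_apply]
      refine Finset.sum_congr rfl fun i _ => ?_
      have : (Pi.single i ((i : R) • y) : ↥s → (N : Type u))
          = (i : R) • (Pi.single i y : ↥s → (N : Type u)) := by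
        rw [← Pi.single_smul]
      rw [this, map_smul]
      rfl
    rw [hfeq, TensorProduct.tmul_sum]
    refine Finset.sum_eq_zero fun i _ => ?_
    have hix : (i : R) • x = 0 := by
      have hia : (i : R) ∈ a := by
        rw [← hs]; exact Ideal.subset_span i.2
      exact (Submodule.mem_annihilator_span_singleton _ _).1 hia
    rw [← TensorProduct.smul_tmul, hix, TensorProduct.zero_tmul]
  constructor
  · -- injectivity
    rw [← LinearMap.ker_eq_bot, eq_bot_iff]
    intro z hz
    have hexact := lTensor_exact (M : Type u)
      (f := (LinearMap.ker r).subtype) (g := r) (LinearMap.exact_subtype_ker_map r) hr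
    obtain ⟨w, hw⟩ := (hexact z).1 (LinearMap.mem_ker.1 hz)
    have : ∀ w : TensorProduct R (M : Type u) (LinearMap.ker r),
        LinearMap.lTensor (M : Type u) (LinearMap.ker r).subtype w = 0 := by
      intro w
      induction w using TensorProduct.induction_on with
      | zero => simp
      | tmul x g =>
        rw [LinearMap.lTensor_tmul]
        exact key x g.1 g.2
      | add w1 w2 h1 h2 => rw [map_add, h1, h2, add_zero]
    rw [← hw, this w]
    exact Submodule.zero_mem ⊥
  · -- surjectivity
    exact LinearMap.lTensor_surjective (M : Type u) hr
end

section
/- Let (R, 𝔪) be a commutative Noetherian local ring, I, J ideals of R, M a finitely generated R-module with t := depth(I,J,M) finite, and let E^•_R(M) be a minimal injective resolution of M. Then Γ_{I,J}(E^i_R(M)) = 0 for all i < t; consequently H^t_{I,J}(M) is isomorphic to the kernel of Γ_{I,J}(E^t_R(M)) → Γ_{I,J}(E^{t+1}_R(M)), and there is an embedding of complexes of R-modules H^t_{I,J}(M)[-t] → Γ_{I,J}(E^•_R(M)). -/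
open CategoryTheory IsLocalRing

universe u

section AuxHomology

variable {R : Type u} [CommRing R]

/-- If the differential into degree `n` vanishes, then the homology of a cochain complex
of modules at `n` is the kernel of the differential out of degree `n`. -/
noncomputable def homologyKerEquiv (C : CochainComplex (ModuleCat.{u} R) ℕ) (n : ℕ)
    (h : ∀ x : C.X (n - 1), (C.d (n - 1) n).hom x = 0) :
    C.homology n ≃ₗ[R] LinearMap.ker (C.d n (n + 1)).hom :=
  have hprev : (ComplexShape.up ℕ).prev n = n - 1 := by
    cases n with
    | zero => exact CochainComplex.prev_nat_zero
    | succ m => exact CochainComplex.prev_nat_succ m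
  have hnext : (ComplexShape.up ℕ).next n = n + 1 :=
    (ComplexShape.up ℕ).next_eq' rfl
  ((C.homologyIsoSc' (n - 1) n (n + 1) hprev hnext) ≪≫
      (C.sc' (n - 1) n (n + 1)).moduleCatHomologyIso).toLinearEquiv ≪≫ₗ
    Submodule.quotEquivOfEqBot _ (by
      rw [LinearMap.range_eq_bot]
      exact LinearMap.ext fun x => Subtype.ext (h x))

end AuxHomology

/-- If `t = depth(I,J,M)` and `E^•` is a minimal injective resolution of `M`, then
`Γ_{I,J}(E^i) = 0` for `i < t`, `H^t_{I,J}(M)` is the kernel of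
`Γ_{I,J}(E^t) → Γ_{I,J}(E^{t+1})`, and there is an embedding of complexes
`H^t_{I,J}(M)[-t] → Γ_{I,J}(E^•)`. -/
theorem statement_12 {R : Type u} [CommRing R] [IsNoetherianRing R] [IsLocalRing R]
    (I J : Ideal R) (M : ModuleCat.{u} R) [Module.Finite R M]
    (t : ℕ) (ht : pairDepth I J M = (t : ℕ∞))
    (P : CategoryTheory.InjectiveResolution M) (hP : IsMinimalInjectiveResolution P) :
    (∀ i : ℕ, i < t → Subsingleton (pairTorsionSubmodule I J (P.cocomplex.X i))) ∧
    Nonempty (((pairLocalCohomology I J t).obj M) ≃ₗ[R]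
      LinearMap.ker ((pairTorsionFunctor I J).map (P.cocomplex.d t (t + 1))).hom) ∧
    ∃ f : (HomologicalComplex.single (ModuleCat.{u} R) (ComplexShape.up ℕ) t).obj
          ((pairLocalCohomology I J t).obj M) ⟶
        ((pairTorsionFunctor I J).mapHomologicalComplex (ComplexShape.up ℕ)).obj P.cocomplex,
      Mono f := by
  classical
  set G := pairTorsionFunctor I J with hGdef
  set C := (G.mapHomologicalComplex (ComplexShape.up ℕ)).obj P.cocomplex with hCdef
  have isoH : ∀ n : ℕ, (pairLocalCohomology I J n).obj M ≅ C.homology n :=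
    fun n => P.isoRightDerivedObj G n
  -- vanishing of local cohomology below t
  have hsub : ∀ i : ℕ, i < t → Subsingleton ((pairLocalCohomology I J i).obj M) := by
    intro i hi
    by_contra hns
    rw [not_subsingleton_iff_nontrivial] at hns
    have hmem : (i : ℕ∞) ∈ {i : ℕ∞ | ∃ n : ℕ, i = n ∧
        Nontrivial ((pairLocalCohomology I J n).obj M)} := ⟨i, rfl, hns⟩
    have hle : pairDepth I J M ≤ (i : ℕ∞) := sInf_le hmem
    rw [ht] at hle
    exact absurd (Nat.cast_le.mp hle) (Nat.not_le.mpr hi)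
  -- the key vanishing of Γ(E^i) for i < t, by strong induction
  have key : ∀ i : ℕ, i < t → Subsingleton (pairTorsionSubmodule I J (P.cocomplex.X i)) := by
    intro i
    induction i using Nat.strong_induction_on with
    | _ i IH =>
      intro hi
      have hzero : ∀ x : C.X (i - 1), (C.d (i - 1) i).hom x = 0 := by
        rcases Nat.eq_zero_or_pos i with h0 | h0
        · subst h0
          intro x
          rw [C.shape 0 0 (by simp)]
          rfl
        · intro x
          have hss : Subsingleton (C.X (i - 1)) := IH (i - 1) (by omega) (by omega)
          rw [Subsingleton.elim x 0, map_zero]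
      have e := homologyKerEquiv C i hzero
      have hH : Subsingleton ((pairLocalCohomology I J i).obj M) := hsub i hi
      have hhom : Subsingleton (C.homology i) :=
        Equiv.subsingleton (isoH i).toLinearEquiv.toEquiv.symm
      have hker : Subsingleton (LinearMap.ker (C.d i (i + 1)).hom) :=
        Equiv.subsingleton e.toEquiv.symm
      have hbot : pairTorsionSubmodule I J (P.cocomplex.X i) = ⊥ := by
        apply hP i
        rw [eq_bot_iff]
        rintro x hx
        obtain ⟨hx1, hx2⟩ := Submodule.mem_inf.1 hx
        rw [LinearMap.mem_ker] at hx2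
        have hmem : (⟨x, hx1⟩ : pairTorsionSubmodule I J (P.cocomplex.X i)) ∈
            LinearMap.ker (C.d i (i + 1)).hom := Subtype.ext hx2
        have h0 := Subsingleton.elim
          (⟨⟨x, hx1⟩, hmem⟩ : LinearMap.ker (C.d i (i + 1)).hom) 0
        have : x = 0 := congrArg (fun z : LinearMap.ker (C.d i (i + 1)).hom => z.1.1) h0
        simpa using this
      rw [hbot]
      exact ⟨fun a b => Subtype.ext (by
        rw [(Submodule.mem_bot R).1 a.2, (Submodule.mem_bot R).1 b.2])⟩
  -- the kernel description of H^t
  have hzt : ∀ x : C.X (t - 1), (C.d (t - 1) t).hom x = 0 := by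
    rcases Nat.eq_zero_or_pos t with h0 | h0
    · subst h0
      intro x
      rw [C.shape 0 0 (by simp)]
      rfl
    · intro x
      have hss : Subsingleton (C.X (t - 1)) := key (t - 1) (by omega)
      rw [Subsingleton.elim x 0, map_zero]
  have et := homologyKerEquiv C t hzt
  have equiv2 : ((pairLocalCohomology I J t).obj M) ≃ₗ[R]
      LinearMap.ker ((pairTorsionFunctor I J).map (P.cocomplex.d t (t + 1))).hom :=
    (isoH t).toLinearEquiv ≪≫ₗ et
  refine ⟨key, ⟨equiv2⟩, ?_⟩
  -- the embedding of complexes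
  let φ : ((pairLocalCohomology I J t).obj M) →ₗ[R] (C.X t) :=
    (LinearMap.ker (C.d t (t + 1)).hom).subtype ∘ₗ equiv2.toLinearMap
  have hφinj : Function.Injective φ :=
    (Submodule.injective_subtype _).comp equiv2.injective
  have hφmono : Mono (ModuleCat.ofHom φ) := (ModuleCat.mono_iff_injective _).2 hφinj
  have hcond : ∀ (k : ℕ), (ComplexShape.up ℕ).Rel t k →
      ModuleCat.ofHom φ ≫ C.d t k = 0 := by
    intro k hk
    have hk' : t + 1 = k := hk
    subst hk'
    ext x
    exact (equiv2 x).2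
  let f' : (HomologicalComplex.single (ModuleCat.{u} R) (ComplexShape.up ℕ) t).obj
        ((pairLocalCohomology I J t).obj M) ⟶ C :=
    HomologicalComplex.mkHomFromSingle (ModuleCat.ofHom φ) hcond
  refine ⟨f', ?_⟩
  · constructor
    intro Z g h hgh
    apply HomologicalComplex.hom_ext
    intro n
    by_cases hn : n = t
    · subst hn
      have hc := congrArg (fun ψ => ψ.f n) hgh
      simp only [HomologicalComplex.comp_f] at hc
      have hm : Mono (f'.f n) := by
        rw [show f'.f n = _ from HomologicalComplex.mkHomFromSingle_f (K := C) (j := n)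
          (A := (pairLocalCohomology I J n).obj M) _ hcond]
        exact mono_comp _ _
      exact (cancel_mono _).1 hc
    · exact (HomologicalComplex.isZero_single_obj_X (ComplexShape.up ℕ) t
        ((pairLocalCohomology I J t).obj M) n hn).eq_of_tgt _ _
end

section
/- Let (R, 𝔪) be a commutative Noetherian local ring, I, J ideals of R, and M a finitely generated R-module with t := depth(I,J,M) finite such that H^i_{I,J}(M) = 0 for all i ≠ t. If E^•_R(M) is a minimal injective resolution of M, then the complex Γ_{I,J}(E^•_R(M)) is a minimal injective resolution of H^t_{I,J}(M) shifted into degrees ≥ t; that is, 0 → H^t_{I,J}(M) → Γ_{I,J}(E^t_R(M)) → Γ_{I,J}(E^{t+1}_R(M)) → ⋯ is exact with each Γ_{I,J}(E^i_R(M)) injective, and Γ_{I,J}(E^i_R(M)) = 0 for i < t. -/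
open CategoryTheory IsLocalRing

universe u

section AuxLemmas

variable {R : Type u} [CommRing R]

lemma mem_pairTorsion_iff {I J : Ideal R} {M : Type u} [AddCommGroup M] [Module R M] {x : M} :
    x ∈ pairTorsionSubmodule I J M ↔
      ∃ n : ℕ, I ^ n ≤ J + (Submodule.span R {x}).annihilator := by
  constructor
  · rintro ⟨n, hn⟩
    refine ⟨n, fun a ha => ?_⟩
    obtain ⟨j, hj, hjx⟩ := Submodule.mem_smul_span_singleton.1 (hn a ha)
    exact Submodule.mem_sup.2 ⟨j, hj, a - j,
      (Submodule.mem_annihilator_span_singleton _ _).2 (by rw [sub_smul, hjx, sub_self]),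
      by ring⟩
  · rintro ⟨n, hn⟩
    refine ⟨n, fun a ha => ?_⟩
    obtain ⟨j, hj, s, hs, rfl⟩ := Submodule.mem_sup.1 (hn ha)
    rw [Submodule.mem_annihilator_span_singleton] at hs
    exact Submodule.mem_smul_span_singleton.2 ⟨j, hj, by rw [add_smul, hs, add_zero]⟩

lemma add_mul_add_le (J a b : Ideal R) : (J + a) * (J + b) ≤ J + a * b := by
  rw [Ideal.mul_le]
  intro x hx y hy
  obtain ⟨jx, hjx, ax, hax, rfl⟩ := Submodule.mem_sup.1 hx
  obtain ⟨jy, hjy, byy, hby, rfl⟩ := Submodule.mem_sup.1 hy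
  have h : (jx + ax) * (jy + byy) = (jx * (jy + byy) + ax * jy) + ax * byy := by ring
  rw [h]
  exact Submodule.mem_sup.2 ⟨_, Ideal.add_mem _ (Ideal.mul_mem_right _ _ hjx)
    (Ideal.mul_mem_left _ _ hjy), _, Ideal.mul_mem_mul hax hby, rfl⟩

lemma pow_le_add_pow {I J c : Ideal R} {N : ℕ} (h : I ^ N ≤ J + c) (k : ℕ) :
    I ^ (N * k) ≤ J + c ^ k := by
  induction k with
  | zero => simp [Ideal.one_eq_top]
  | succ m ih =>
      have h2 : I ^ (N * (m + 1)) = I ^ (N * m) * I ^ N := by rw [← pow_add]; ring_nf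
      rw [h2, pow_succ]
      calc I ^ (N * m) * I ^ N ≤ (J + c ^ m) * (J + c) := Ideal.mul_mono ih h
        _ ≤ J + c ^ m * c := add_mul_add_le _ _ _

lemma annihilator_inf_le {M : Type u} [AddCommGroup M] [Module R M] (A B : Submodule R M) :
    A.annihilator ⊓ B.annihilator ≤ (A ⊔ B).annihilator := by
  intro r hr
  rw [Submodule.mem_annihilator']
  exact sup_le (Submodule.mem_annihilator'.1 hr.1) (Submodule.mem_annihilator'.1 hr.2)

lemma exists_pow_le_add_annihilator {I J : Ideal R} {M : Type u} [AddCommGroup M] [Module R M]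
    {T : Submodule R M} (hT : T.FG) (hTle : T ≤ pairTorsionSubmodule I J M) :
    ∃ n : ℕ, I ^ n ≤ J + T.annihilator := by
  classical
  obtain ⟨s, rfl⟩ := hT
  induction s using Finset.induction_on with
  | empty =>
      refine ⟨0, ?_⟩
      simp [Submodule.annihilator_bot]
  | @insert a s _ ih =>
      have hs : Submodule.span R (s : Set M) ≤ pairTorsionSubmodule I J M :=
        le_trans (Submodule.span_mono (by simp)) hTle
      obtain ⟨n1, hn1⟩ := ih hs
      have ha : a ∈ pairTorsionSubmodule I J M :=
        hTle (Submodule.subset_span (by simp))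
      obtain ⟨n2, hn2⟩ := mem_pairTorsion_iff.1 ha
      refine ⟨n1 + n2, ?_⟩
      have hspan : Submodule.span R (insert a (s : Set M)) =
          Submodule.span R (s : Set M) ⊔ Submodule.span R {a} := by
        rw [Submodule.span_insert, sup_comm]
      rw [Finset.coe_insert, hspan]
      calc I ^ (n1 + n2) = I ^ n1 * I ^ n2 := by rw [pow_add]
        _ ≤ (J + (Submodule.span R (s : Set M)).annihilator) *
            (J + (Submodule.span R {a}).annihilator) := Ideal.mul_mono hn1 hn2
        _ ≤ J + (Submodule.span R (s : Set M)).annihilator *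
            (Submodule.span R {a}).annihilator := add_mul_add_le _ _ _
        _ ≤ J + ((Submodule.span R (s : Set M)) ⊔ Submodule.span R {a}).annihilator := by
            exact sup_le_sup_left (le_trans Ideal.mul_le_inf (annihilator_inf_le _ _)) _

lemma pairTorsion_baer [IsNoetherianRing R] (I J : Ideal R) (E : Type u) [AddCommGroup E]
    [Module R E] (hE : Module.Baer R E) :
    Module.Baer R (↥(pairTorsionSubmodule I J E)) := by
  intro b f
  set f' : ↥b →ₗ[R] E := (pairTorsionSubmodule I J E).subtype ∘ₗ f with hf'
  set T : Submodule R E := LinearMap.range f' with hT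
  have hTfg : T.FG := by
    have h1 : (⊤ : Submodule R ↥b).FG := IsNoetherian.noetherian _
    have h2 := Submodule.FG.map f' h1
    rwa [Submodule.map_top] at h2
  have hTle : T ≤ pairTorsionSubmodule I J E := by rintro _ ⟨x, rfl⟩; exact (f x).2
  obtain ⟨N, hN⟩ := exists_pow_le_add_annihilator hTfg hTle
  set c : Ideal R := T.annihilator with hc
  obtain ⟨k, hk⟩ := Ideal.exists_pow_inf_eq_pow_smul c (b : Submodule R R)
  set a : Ideal R := c ^ (k + 1) with ha
  have hpow : I ^ (N * (k + 1)) ≤ J + a := pow_le_add_pow hN (k + 1)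
  have hAR : (a : Submodule R R) ⊓ (b : Submodule R R) ≤ c • (b : Submodule R R) := by
    have h1 := hk (k + 1) (by omega)
    rw [show k + 1 - k = 1 by omega, pow_one] at h1
    rw [show (c ^ (k + 1) • (⊤ : Submodule R R)) = (a : Submodule R R) by
      rw [Ideal.smul_eq_mul, Ideal.mul_top]] at h1
    rw [h1]
    exact smul_mono_right c inf_le_right
  have hker : ∀ x : ↥b, (x : R) ∈ a → f' x = 0 := by
    intro x hx
    have hsmul : c • (⊤ : Submodule R ↥b) ≤ LinearMap.ker f' := by
      rw [Submodule.smul_le]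
      intro r hr y _
      rw [LinearMap.mem_ker, map_smul]
      exact Submodule.mem_annihilator.1 hr _ ⟨y, rfl⟩
    have hx2 : (x : R) ∈ Submodule.map b.subtype (c • (⊤ : Submodule R ↥b)) := by
      rw [Submodule.map_smul'', Submodule.map_top, Submodule.range_subtype]
      exact hAR ⟨hx, x.2⟩
    obtain ⟨y, hy, hyx⟩ := hx2
    have hxy : y = x := Subtype.ext hyx
    rw [← hxy]
    exact hsmul hy
  let pf : R →ₗ.[R] E := ⟨b, f'⟩
  let pg : R →ₗ.[R] E := ⟨(a : Submodule R R), 0⟩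
  have hcompat : ∀ (x : pf.domain) (y : pg.domain), (x : R) = (y : R) → pf x = pg y := by
    intro x y hxy
    have hxa : (x : R) ∈ a := hxy ▸ y.2
    show f' x = 0
    exact hker x hxa
  set F := pf.sup pg hcompat with hF
  obtain ⟨h, hh⟩ := hE (b ⊔ a) F.toFun
  set y : E := h 1 with hy
  have happ : ∀ (r : R) (hr : r ∈ b ⊔ (a : Submodule R R)), h r = F ⟨r, hr⟩ := hh
  have hyb : ∀ r : ↥b, (r : R) • y = f' r := by
    intro r
    have hmem : (r : R) ∈ b ⊔ (a : Submodule R R) := Submodule.mem_sup_left r.2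
    have h2 : F ⟨(r : R), hmem⟩ = pf r + pg 0 :=
      LinearPMap.sup_apply hcompat r 0 ⟨(r : R), hmem⟩ (by simp)
    have h3 : h r = f' r := by
      rw [happ r hmem, h2]
      show f' r + (0 : ↥(pg.domain) →ₗ[R] E) 0 = f' r
      simp
    rw [hy, ← map_smul, smul_eq_mul, mul_one, h3]
  have hya : ∀ s ∈ a, s • y = 0 := by
    intro s hs
    have hmem : s ∈ b ⊔ (a : Submodule R R) := Submodule.mem_sup_right hs
    have h2 : F ⟨s, hmem⟩ = pf 0 + pg ⟨s, hs⟩ :=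
      LinearPMap.sup_apply hcompat 0 ⟨s, hs⟩ ⟨s, hmem⟩ (by simp)
    have h3 : h s = 0 := by
      rw [happ s hmem, h2]
      show f' 0 + (0 : ↥(pg.domain) →ₗ[R] E) ⟨s, hs⟩ = 0
      simp
    rw [hy, ← map_smul, smul_eq_mul, mul_one, h3]
  have hyI : y ∈ pairTorsionSubmodule I J E := by
    rw [mem_pairTorsion_iff]
    refine ⟨N * (k + 1), le_trans hpow (sup_le_sup_left ?_ J)⟩
    intro s hs
    exact (Submodule.mem_annihilator_span_singleton _ _).2 (hya s hs)
  refine ⟨LinearMap.toSpanSingleton R ↥(pairTorsionSubmodule I J E) ⟨y, hyI⟩,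
    fun x hx => Subtype.ext ?_⟩
  simpa [hf'] using hyb ⟨x, hx⟩

lemma pairTorsion_injective [IsNoetherianRing R] (I J : Ideal R) (E : ModuleCat.{u} R)
    [CategoryTheory.Injective E] :
    CategoryTheory.Injective (ModuleCat.of R (↥(pairTorsionSubmodule I J E))) := by
  have hEinj : CategoryTheory.Injective (ModuleCat.of R E) := ‹_›
  have h1 : Module.Injective R E := Module.injective_module_of_injective_object R E
  have hE : Module.Baer R E := Module.Baer.of_injective h1
  have h2 : Module.Injective R ↥(pairTorsionSubmodule I J E) :=
    (pairTorsion_baer I J E hE).injective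
  exact Module.injective_object_of_injective_module R _

end AuxLemmas

/-- If `t = depth(I,J,M)` is finite, `H^i_{I,J}(M) = 0` for all `i ≠ t`, and `E^•` is a minimal
injective resolution of `M`, then `Γ_{I,J}(E^•)` is (a shift of) an injective resolution of
`H^t_{I,J}(M)`: its terms vanish in degrees `< t`, are injective in every degree, and there is a
monomorphism of complexes from `H^t_{I,J}(M)[-t]` which is a quasi-isomorphism (equivalently,
`0 → H^t_{I,J}(M) → Γ_{I,J}(E^t) → Γ_{I,J}(E^{t+1}) → ⋯` is exact). -/
theorem statement_13 {R : Type u} [CommRing R] [IsNoetherianRing R] [IsLocalRing R]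
    (I J : Ideal R) (M : ModuleCat.{u} R) [Module.Finite R M]
    (t : ℕ) (ht : pairDepth I J M = (t : ℕ∞))
    (hvan : ∀ i : ℕ, i ≠ t → Subsingleton ((pairLocalCohomology I J i).obj M))
    (P : CategoryTheory.InjectiveResolution M) (hP : IsMinimalInjectiveResolution P) :
    (∀ i : ℕ, i < t →
      Subsingleton
        ((((pairTorsionFunctor I J).mapHomologicalComplex (ComplexShape.up ℕ)).obj
          P.cocomplex).X i)) ∧
    (∀ i : ℕ,
      CategoryTheory.Injective
        ((((pairTorsionFunctor I J).mapHomologicalComplex (ComplexShape.up ℕ)).obj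
          P.cocomplex).X i)) ∧
    ∃ f : (HomologicalComplex.single (ModuleCat.{u} R) (ComplexShape.up ℕ) t).obj
          ((pairLocalCohomology I J t).obj M) ⟶
        ((pairTorsionFunctor I J).mapHomologicalComplex (ComplexShape.up ℕ)).obj P.cocomplex,
      CategoryTheory.Mono f ∧ QuasiIso f := by
  classical
  have hnext : ∀ n : ℕ, (ComplexShape.up ℕ).next n = n + 1 :=
    fun n => (ComplexShape.up ℕ).next_eq' rfl
  set F := pairTorsionFunctor I J with hFdef
  set C := (F.mapHomologicalComplex (ComplexShape.up ℕ)).obj P.cocomplex with hCdef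
  have hiso : ∀ n : ℕ, (pairLocalCohomology I J n).obj M ≅ C.homology n := fun n =>
    P.isoRightDerivedObj F n
  have hzero : ∀ n, n ≠ t → Limits.IsZero (C.homology n) := fun n hn =>
    haveI := hvan n hn
    (ModuleCat.isZero_of_subsingleton _).of_iso (hiso n).symm
  have hexact : ∀ n, n ≠ t → C.ExactAt n := fun n hn =>
    (C.exactAt_iff_isZero_homology n).2 (hzero n hn)
  have hA : ∀ i : ℕ, i < t → Subsingleton ↥(pairTorsionSubmodule I J ↥(P.cocomplex.X i)) := by
    intro i
    induction i with
    | zero =>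
      intro h0
      have hex := hexact 0 (by omega)
      rw [C.exactAt_iff' 0 0 1 CochainComplex.prev_nat_zero (hnext 0),
        ShortComplex.moduleCat_exact_iff] at hex
      have hbot : pairTorsionSubmodule I J ↥(P.cocomplex.X 0) ⊓
          LinearMap.ker (P.cocomplex.d 0 1).hom = ⊥ := by
        rw [eq_bot_iff]
        intro x hx
        obtain ⟨hx1, hx2⟩ := Submodule.mem_inf.1 hx
        have hz : (C.sc' 0 0 1).g
            (⟨x, hx1⟩ : ↥(pairTorsionSubmodule I J ↥(P.cocomplex.X 0))) = 0 :=
          Subtype.ext hx2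
        obtain ⟨w, hw⟩ := hex _ hz
        have hz0 : (⟨x, hx1⟩ : ↥(pairTorsionSubmodule I J ↥(P.cocomplex.X 0))) = 0 := by
          rw [← hw]
          show C.d 0 0 w = 0
          rw [C.shape 0 0 (by simp)]
          rfl
        rw [Submodule.mem_bot]
        exact congrArg Subtype.val hz0
      have hb := hP 0 _ hbot
      exact ⟨fun u v => Subtype.ext (((Submodule.mem_bot R).1 (hb ▸ u.2)).trans
        ((Submodule.mem_bot R).1 (hb ▸ v.2)).symm)⟩
    | succ n ih =>
      intro hn1
      haveI hsub : Subsingleton ↥(pairTorsionSubmodule I J ↥(P.cocomplex.X n)) := ih (by omega)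
      have hex := hexact (n + 1) (by omega)
      rw [C.exactAt_iff' n (n + 1) (n + 2) (CochainComplex.prev_nat_succ n) (hnext (n + 1)),
        ShortComplex.moduleCat_exact_iff] at hex
      have hbot : pairTorsionSubmodule I J ↥(P.cocomplex.X (n + 1)) ⊓
          LinearMap.ker (P.cocomplex.d (n + 1) (n + 1 + 1)).hom = ⊥ := by
        rw [eq_bot_iff]
        intro x hx
        obtain ⟨hx1, hx2⟩ := Submodule.mem_inf.1 hx
        have hz : (C.sc' n (n + 1) (n + 2)).g
            (⟨x, hx1⟩ : ↥(pairTorsionSubmodule I J ↥(P.cocomplex.X (n + 1)))) = 0 :=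
          Subtype.ext hx2
        obtain ⟨w, hw⟩ := hex _ hz
        haveI : Subsingleton ((C.sc' n (n + 1) (n + 2)).X₁) := hsub
        have hw0 : w = 0 := Subsingleton.elim w 0
        have hz0 : (⟨x, hx1⟩ : ↥(pairTorsionSubmodule I J ↥(P.cocomplex.X (n + 1)))) = 0 := by
          rw [← hw, hw0, map_zero]
          rfl
        rw [Submodule.mem_bot]
        exact congrArg Subtype.val hz0
      have hb := hP (n + 1) _ hbot
      exact ⟨fun u v => Subtype.ext (((Submodule.mem_bot R).1 (hb ▸ u.2)).trans
        ((Submodule.mem_bot R).1 (hb ▸ v.2)).symm)⟩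
  refine ⟨fun i hi => hA i hi, fun i => ?_, ?_⟩
  · haveI := P.injective i
    exact pairTorsion_injective I J (P.cocomplex.X i)
  · set A := (pairLocalCohomology I J t).obj M with hAdef
    set K := (HomologicalComplex.single (ModuleCat.{u} R) (ComplexShape.up ℕ) t).obj A with hKdef
    have hdtC : C.d ((ComplexShape.up ℕ).prev t) t = 0 := by
      cases t with
      | zero =>
        rw [CochainComplex.prev_nat_zero]
        exact C.shape 0 0 (by simp)
      | succ n =>
        rw [CochainComplex.prev_nat_succ]
        haveI : Subsingleton ↥(C.X n) := hA n (by omega)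
        exact (ModuleCat.isZero_of_subsingleton (C.X n)).eq_of_src _ 0
    haveI hπC : IsIso (C.homologyπ t) := C.isIso_homologyπ _ t rfl hdtC
    have hdtK : K.d ((ComplexShape.up ℕ).prev t) t = 0 := by
      apply HomologicalComplex.single_obj_d
    haveI hπK : IsIso (K.homologyπ t) := K.isIso_homologyπ _ t rfl hdtK
    have hdK2 : K.d t ((ComplexShape.up ℕ).next t) = 0 := by
      apply HomologicalComplex.single_obj_d
    haveI hiK : IsIso (K.iCycles t) := K.isIso_iCycles t _ rfl hdK2
    let φ : A ⟶ C.X t := (hiso t).hom ≫ inv (C.homologyπ t) ≫ C.iCycles t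
    have hφ : ∀ i, (ComplexShape.up ℕ).Rel t i → φ ≫ C.d t i = 0 := by
      intro i hi
      simp [φ]
    refine ⟨HomologicalComplex.mkHomFromSingle φ hφ, ?_, ?_⟩
    · apply HomologicalComplex.mono_of_mono_f
      intro n
      by_cases hn : n = t
      · subst hn
        rw [HomologicalComplex.mkHomFromSingle_f]
        infer_instance
      · have hz := HomologicalComplex.isZero_single_obj_X (ComplexShape.up ℕ) t A n hn
        exact ⟨fun g h _ => hz.eq_of_tgt g h⟩
    · constructor
      intro n
      by_cases hn : n = t
      · subst hn
        rw [quasiIsoAt_iff_isIso_homologyMap]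
        have hcyc : HomologicalComplex.cyclesMap (HomologicalComplex.mkHomFromSingle φ hφ) n =
            K.iCycles n ≫ (HomologicalComplex.singleObjXSelf (ComplexShape.up ℕ) n A).hom ≫
              (hiso n).hom ≫ inv (C.homologyπ n) := by
          rw [← cancel_mono (C.iCycles n)]
          rw [HomologicalComplex.cyclesMap_i, HomologicalComplex.mkHomFromSingle_f]
          simp [φ]
          rfl
        have hhom : HomologicalComplex.homologyMap
              (HomologicalComplex.mkHomFromSingle φ hφ) n =
            inv (K.homologyπ n) ≫
              HomologicalComplex.cyclesMap (HomologicalComplex.mkHomFromSingle φ hφ) n ≫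
                C.homologyπ n := by
          rw [IsIso.eq_inv_comp]
          exact HomologicalComplex.homologyπ_naturality _ _
        rw [hhom, hcyc]
        infer_instance
      · exact (quasiIsoAt_iff_exactAt _ n
          (HomologicalComplex.exactAt_single_obj _ t A n hn)).2 (hexact n hn)
end
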